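/- arXiv:2503.00772 — 3 statements merged into one kernel-verified Lean document; each statement's English description precedes it below -/
import Mathlib

section
/- For the quantile loss function q_τ(u) = u(τ - 1{u ≤ 0}), the identity q_τ(u - v) - q_τ(u) = -v(τ - 1{u ≤ 0}) + ∫_0^v (1{u ≤ s} - 1{u ≤ 0}) ds (Knight's identity) holds for all real u, v. -/
/-!
The step `s ↦ 1{u ≤ s}` is the right derivative of the ramp `s ↦ (s - u)⁺` everywhere, kink
included, so the fundamental theorem of calculus gives `∫₀^v 1{u ≤ s} ds = (v - u)⁺ - (-u)⁺`.
What remains is an elementary identity, checked case by case on the signs of `u` and `u - v`.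
-/

open Set intervalIntegral

/-- The quantile (check) loss function `q_τ(u) = u(τ - 1{u ≤ 0})`. -/
noncomputable def quantileLoss (τ : ℝ) (u : ℝ) : ℝ := u * (τ - if u ≤ 0 then 1 else 0)

lemma monotone_ite_le_one_zero (u : ℝ) : Monotone fun s : ℝ => if u ≤ s then (1 : ℝ) else 0 := by
  intro s t hst
  dsimp only
  split_ifs with hs ht <;> first | exact absurd (hs.trans hst) ht | norm_num

lemma hasDerivWithinAt_max_sub_zero_Ioi (u x : ℝ) :
    HasDerivWithinAt (fun s => max (s - u) 0) (if u ≤ x then 1 else 0) (Ioi x) x := by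
  split_ifs with hux
  · refine ((hasDerivAt_id x).sub_const u).hasDerivWithinAt.congr (fun s hs => ?_) ?_
    · exact max_eq_left (by simp only [mem_Ioi] at hs; linarith)
    · exact max_eq_left (by linarith)
  · have hzero : (fun s => max (s - u) 0) =ᶠ[nhds x] fun _ => 0 := by
      filter_upwards [Iio_mem_nhds (not_le.mp hux)] with s hs
      exact max_eq_right (by simp only [mem_Iio] at hs; linarith)
    exact ((hasDerivAt_const x (0 : ℝ)).congr_of_eventuallyEq hzero).hasDerivWithinAt

lemma integral_ite_le_one_zero (u a b : ℝ) :
    ∫ s in a..b, (if u ≤ s then (1 : ℝ) else 0) = max (b - u) 0 - max (a - u) 0 :=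
  integral_eq_sub_of_hasDeriv_right (by fun_prop)
    (fun x _ => hasDerivWithinAt_max_sub_zero_Ioi u x) (monotone_ite_le_one_zero u).intervalIntegrable

theorem knight_identity_general (τ : ℝ) (u v : ℝ) :
    quantileLoss τ (u - v) - quantileLoss τ u =
      -v * (τ - if u ≤ 0 then 1 else 0) +
        ∫ s in (0:ℝ)..v,
          ((if u ≤ s then (1:ℝ) else 0) - (if u ≤ 0 then (1:ℝ) else 0)) := by
  rw [integral_sub (monotone_ite_le_one_zero u).intervalIntegrable intervalIntegrable_const,
    integral_ite_le_one_zero, integral_const, smul_eq_mul]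
  simp only [quantileLoss, max_def]
  split_ifs <;> linarith

/-- Knight's identity:
`q_τ(u - v) - q_τ(u) = -v(τ - 1{u ≤ 0}) + ∫_0^v (1{u ≤ s} - 1{u ≤ 0}) ds`. -/
theorem knight_identity (τ : ℝ) (hτ : τ ∈ Set.Ioo (0:ℝ) 1) (u v : ℝ) :
    quantileLoss τ (u - v) - quantileLoss τ u =
      -v * (τ - if u ≤ 0 then 1 else 0) +
        ∫ s in (0:ℝ)..v,
          ((if u ≤ s then (1:ℝ) else 0) - (if u ≤ 0 then (1:ℝ) else 0)) :=
  knight_identity_general τ u v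
end

section
/- If a real random variable ε satisfies P(ε ≤ 0) = τ and its density g is bounded below by g̲ > 0 on the interval [-c, c], then for all |v| ≤ c, E[q_τ(ε - v) - q_τ(ε)] ≥ (g̲/2) v². -/
/-!
Knight's identity splits `q_τ(u - v) - q_τ(u)` into the term `-v (τ - 1{u ≤ 0})`, whose
expectation vanishes because `P(ε ≤ 0) = τ`, and the remainder, which is `|v - u|` for `u`
between `0` and `v` and `0` elsewhere. The remainder is nonnegative and supported where
`g ≥ g̲`, so its expectation `∫ g(s) |v - s| ds` over that interval is at least
`g̲ ∫ |v - s| ds = g̲ v² / 2`.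
-/

open MeasureTheory

/-- The remainder `∫₀^v (1{u ≤ s} - 1{u ≤ 0}) ds` in Knight's identity. -/
noncomputable def knightRemainder (v u : ℝ) : ℝ := (Set.uIoc 0 v).indicator (fun s => |v - s|) u

theorem quantileLoss_sub_sub_quantileLoss (τ u v : ℝ) :
    quantileLoss τ (u - v) - quantileLoss τ u
      = -(v * (τ - (Set.Iic 0).indicator 1 u)) + knightRemainder v u := by
  simp only [quantileLoss, knightRemainder, Set.indicator, Set.mem_uIoc, Set.mem_Iic, Pi.one_apply]
  split_ifs <;> grind

section KnightRemainder

variable (v : ℝ)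

theorem knightRemainder_nonneg (u : ℝ) : 0 ≤ knightRemainder v u :=
  Set.indicator_nonneg (fun _ _ => abs_nonneg _) u

theorem abs_knightRemainder_le (u : ℝ) : |knightRemainder v u| ≤ |v| := by
  unfold knightRemainder
  by_cases hu : u ∈ Set.uIoc 0 v
  · rw [Set.indicator_of_mem hu, abs_abs]
    rcases Set.mem_uIoc.1 hu with h | h <;> rw [abs_le] <;> constructor <;>
      cases abs_cases v <;> linarith
  · simp [hu]

theorem measurable_knightRemainder : Measurable (knightRemainder v) :=
  (continuous_const.sub continuous_id).abs.measurable.indicator measurableSet_uIoc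

theorem integrable_knightRemainder : Integrable (knightRemainder v) :=
  (integrable_indicator_iff measurableSet_uIoc).2
    (continuous_const.sub continuous_id).abs.integrableOn_uIoc

theorem integral_knightRemainder : ∫ u, knightRemainder v u = v ^ 2 / 2 := by
  unfold knightRemainder
  rw [integral_indicator measurableSet_uIoc]
  rcases le_total 0 v with hv | hv
  · rw [Set.uIoc_of_le hv, ← intervalIntegral.integral_of_le hv,
      intervalIntegral.integral_congr (g := fun s => v - s) fun s hs => ?_]
    · rw [intervalIntegral.integral_comp_sub_left (fun x => x)]
      simp
    · rw [Set.uIcc_of_le hv] at hs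
      exact abs_of_nonneg (by linarith [hs.2])
  · rw [Set.uIoc_of_ge hv, ← intervalIntegral.integral_of_le hv,
      intervalIntegral.integral_congr (g := fun s => s - v) fun s hs => ?_]
    · rw [intervalIntegral.integral_comp_sub_right (fun x => x)]
      simp
    · rw [Set.uIcc_of_le hv] at hs
      rw [abs_sub_comm]
      exact abs_of_nonneg (by linarith [hs.1])

theorem mul_sq_div_two_le_integral_mul_knightRemainder {g : ℝ → ℝ} (hg : Integrable g)
    {gbar : ℝ} (hlb : ∀ s ∈ Set.uIoc 0 v, gbar ≤ g s) :
    gbar * v ^ 2 / 2 ≤ ∫ s, g s * knightRemainder v s := by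
  have hgR : Integrable (fun s => g s * knightRemainder v s) :=
    hg.mul_bdd (measurable_knightRemainder v).aestronglyMeasurable
      (ae_of_all _ (abs_knightRemainder_le v))
  calc gbar * v ^ 2 / 2 = ∫ s, gbar * knightRemainder v s := by
        rw [integral_const_mul, integral_knightRemainder]; ring
    _ ≤ ∫ s, g s * knightRemainder v s :=
        integral_mono ((integrable_knightRemainder v).const_mul gbar) hgR fun s => by
          by_cases hs : s ∈ Set.uIoc 0 v
          · exact mul_le_mul_of_nonneg_right (hlb s hs) (knightRemainder_nonneg v s)
          · simp [knightRemainder, hs]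

end KnightRemainder

theorem integral_quantileLoss_sub_sub_quantileLoss {Ω : Type*} [MeasurableSpace Ω]
    {μ : Measure Ω} [IsProbabilityMeasure μ] {τ : ℝ} (hτ : 0 ≤ τ) {X : Ω → ℝ}
    (hX : Measurable X) (hX0 : μ {ω | X ω ≤ 0} = ENNReal.ofReal τ) (v : ℝ) :
    ∫ ω, (quantileLoss τ (X ω - v) - quantileLoss τ (X ω)) ∂μ
      = ∫ ω, knightRemainder v (X ω) ∂μ := by
  have hset : MeasurableSet (X ⁻¹' Set.Iic 0) := hX measurableSet_Iic
  have hind_int : Integrable ((X ⁻¹' Set.Iic 0).indicator (1 : Ω → ℝ)) μ :=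
    (integrable_const 1).indicator hset
  have hP : μ.real (X ⁻¹' Set.Iic 0) = τ := by
    rw [measureReal_def, ← ENNReal.toReal_ofReal hτ, ← hX0]
    rfl
  have hlin_int : Integrable (fun ω => -(v * (τ - (X ⁻¹' Set.Iic 0).indicator 1 ω))) μ :=
    (((integrable_const τ).sub hind_int).const_mul v).neg
  have hlin : ∫ ω, -(v * (τ - (X ⁻¹' Set.Iic 0).indicator 1 ω)) ∂μ = 0 := by
    rw [integral_neg, integral_const_mul, integral_sub (integrable_const τ) hind_int,
      integral_indicator_one hset, hP]
    simp
  have hR_int : Integrable (fun ω => knightRemainder v (X ω)) μ :=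
    .of_bound ((measurable_knightRemainder v).comp hX).aestronglyMeasurable |v|
      (ae_of_all _ fun ω => abs_knightRemainder_le v (X ω))
  simp_rw [quantileLoss_sub_sub_quantileLoss]
  exact (integral_add hlin_int hR_int).trans (by rw [hlin, zero_add])

theorem integrable_of_map_eq_withDensity {Ω β : Type*} [MeasurableSpace Ω] [MeasurableSpace β]
    {μ : Measure Ω} [IsFiniteMeasure μ] {ν : Measure β} {X : Ω → β} {g : β → ℝ}
    (hg : Measurable g) (hg0 : ∀ s, 0 ≤ g s)
    (hX : μ.map X = ν.withDensity fun s => ENNReal.ofReal (g s)) : Integrable g ν := by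
  have hfin : ∫⁻ s, ENNReal.ofReal (g s) ∂ν ≠ ⊤ := by
    rw [← setLIntegral_univ, ← withDensity_apply _ MeasurableSet.univ, ← hX]
    exact measure_ne_top _ _
  simpa [ENNReal.toReal_ofReal (hg0 _)] using
    integrable_toReal_of_lintegral_ne_top hg.ennreal_ofReal.aemeasurable hfin

theorem integral_comp_eq_integral_mul_of_map_eq_withDensity {Ω β : Type*} [MeasurableSpace Ω]
    [MeasurableSpace β] {μ : Measure Ω} {ν : Measure β} {X : Ω → β} (hXm : AEMeasurable X μ)
    {g : β → ℝ} (hg : Measurable g) (hg0 : ∀ s, 0 ≤ g s)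
    (hX : μ.map X = ν.withDensity fun s => ENNReal.ofReal (g s)) {f : β → ℝ}
    (hf : Measurable f) :
    ∫ ω, f (X ω) ∂μ = ∫ s, g s * f s ∂ν := by
  rw [← integral_map hXm hf.aestronglyMeasurable, hX,
    show (fun s => ENNReal.ofReal (g s)) = fun s => ((g s).toNNReal : ENNReal) from rfl,
    integral_withDensity_eq_integral_smul hg.real_toNNReal]
  simp [NNReal.smul_def, Real.coe_toNNReal _ (hg0 _)]

theorem check_loss_quadratic_lower_bound_general
    {Ω : Type*} [MeasurableSpace Ω] (μ : Measure Ω) [IsProbabilityMeasure μ]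
    (τ : ℝ) (hτ : τ ∈ Set.Ioo (0:ℝ) 1)
    (ε : Ω → ℝ) (hmeas : Measurable ε)
    (g : ℝ → ℝ) (hg_meas : Measurable g) (hg_nonneg : ∀ s, 0 ≤ g s)
    (hdens : Measure.map ε μ =
      MeasureTheory.volume.withDensity fun s => ENNReal.ofReal (g s))
    (c gbar : ℝ)
    (hlb : ∀ s ∈ Set.Icc (-c) c, gbar ≤ g s)
    (hτ0 : μ {ω | ε ω ≤ 0} = ENNReal.ofReal τ) :
    ∀ v : ℝ, |v| ≤ c →
      gbar / 2 * v ^ 2 ≤ ∫ ω, (quantileLoss τ (ε ω - v) - quantileLoss τ (ε ω)) ∂μ := by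
  intro v hv
  obtain ⟨hvl, hvu⟩ := abs_le.1 hv
  have hsub : Set.uIoc 0 v ⊆ Set.Icc (-c) c :=
    Set.uIoc_subset_uIcc.trans (Set.uIcc_subset_Icc ⟨by linarith, by linarith⟩ ⟨hvl, hvu⟩)
  rw [integral_quantileLoss_sub_sub_quantileLoss hτ.1.le hmeas hτ0,
    integral_comp_eq_integral_mul_of_map_eq_withDensity hmeas.aemeasurable hg_meas hg_nonneg
      hdens (measurable_knightRemainder v)]
  have := mul_sq_div_two_le_integral_mul_knightRemainder v
    (integrable_of_map_eq_withDensity hg_meas hg_nonneg hdens) fun s hs => hlb s (hsub hs)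
  linarith

/-- If `P(ε ≤ 0) = τ` and the density `g` of `ε` is bounded below by `g̲ > 0` on
`[-c, c]`, then for all `|v| ≤ c`, `E[q_τ(ε - v) - q_τ(ε)] ≥ (g̲/2) v²`. -/
theorem check_loss_quadratic_lower_bound
    {Ω : Type*} [MeasurableSpace Ω] (μ : Measure Ω) [IsProbabilityMeasure μ]
    (τ : ℝ) (hτ : τ ∈ Set.Ioo (0:ℝ) 1)
    (ε : Ω → ℝ) (hmeas : Measurable ε) (hint : Integrable ε μ)
    (g : ℝ → ℝ) (hg_meas : Measurable g) (hg_nonneg : ∀ s, 0 ≤ g s)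
    (hdens : Measure.map ε μ =
      MeasureTheory.volume.withDensity fun s => ENNReal.ofReal (g s))
    (c gbar : ℝ) (hc : 0 < c) (hgbar : 0 < gbar)
    (hlb : ∀ s ∈ Set.Icc (-c) c, gbar ≤ g s)
    (hτ0 : μ {ω | ε ω ≤ 0} = ENNReal.ofReal τ) :
    ∀ v : ℝ, |v| ≤ c →
      gbar / 2 * v ^ 2 ≤ ∫ ω, (quantileLoss τ (ε ω - v) - quantileLoss τ (ε ω)) ∂μ :=
  check_loss_quadratic_lower_bound_general μ τ hτ ε hmeas g hg_meas hg_nonneg hdens c gbar hlb hτ0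
end

section
/- Let F and F̂ be T×r matrices with FᵀF/T = F̂ᵀF̂/T = I_r, and let Λ, Λ̂ be N×r matrices. If (1/(NT))‖Λ̂F̂ᵀ - ΛFᵀ‖² ≤ δ², then (1/T)‖(I - P_{F̂})F‖²_F · λ_min(ΛᵀΛ/N) ≤ δ², where P_{F̂} = F̂F̂ᵀ/T is the projection onto the column space of F̂ and λ_min denotes the smallest eigenvalue. -/
/-!
Let `Q = I - P_{F̂}` and `B = Q F`. Since `Q F̂ = 0`, applying `Q` to the transposed residual
`F̂ Λ̂ᵀ - F Λᵀ` leaves `-B Λᵀ`, and an orthogonal projection does not increase the Frobenius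
norm, so `‖B Λᵀ‖² ≤ ‖Λ̂ F̂ᵀ - Λ Fᵀ‖²`. On the other hand
`‖B Λᵀ‖² = tr(B (ΛᵀΛ) Bᵀ) ≥ N λ_min(ΛᵀΛ/N) ‖B‖²`.
-/

open Matrix

attribute [local instance] Matrix.frobeniusNormedAddCommGroup

section Frobenius

variable {m n : Type*} [Fintype m] [Fintype n]

theorem frobenius_norm_sq_eq_trace_transpose_mul (A : Matrix m n ℝ) :
    ‖A‖ ^ 2 = (Aᵀ * A).trace := by
  rw [frobenius_norm_def, ← Real.sqrt_eq_rpow, Real.sq_sqrt (by positivity), Finset.sum_comm]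
  simp [trace, mul_apply, sq]

theorem frobenius_norm_sq_eq_trace_mul_transpose (A : Matrix m n ℝ) :
    ‖A‖ ^ 2 = (A * Aᵀ).trace := by
  rw [← frobenius_norm_transpose, frobenius_norm_sq_eq_trace_transpose_mul, transpose_transpose]

theorem frobenius_norm_sq_mul_eq_trace_of_isIdempotentElem {Q : Matrix m m ℝ} (hQt : Qᵀ = Q)
    (hQ : IsIdempotentElem Q) (A : Matrix m n ℝ) :
    ‖Q * A‖ ^ 2 = (Aᵀ * Q * A).trace := by
  rw [frobenius_norm_sq_eq_trace_transpose_mul, transpose_mul, hQt, Matrix.mul_assoc,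
    ← Matrix.mul_assoc Q, hQ.eq, Matrix.mul_assoc]

theorem frobenius_norm_mul_le_of_isIdempotentElem [DecidableEq m] {Q : Matrix m m ℝ}
    (hQt : Qᵀ = Q) (hQ : IsIdempotentElem Q) (A : Matrix m n ℝ) :
    ‖Q * A‖ ≤ ‖A‖ := by
  have hQt' : (1 - Q)ᵀ = 1 - Q := by rw [transpose_sub, transpose_one, hQt]
  have pythagoras : ‖Q * A‖ ^ 2 + ‖(1 - Q) * A‖ ^ 2 = ‖A‖ ^ 2 := by
    rw [frobenius_norm_sq_mul_eq_trace_of_isIdempotentElem hQt hQ,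
      frobenius_norm_sq_mul_eq_trace_of_isIdempotentElem hQt' hQ.one_sub,
      frobenius_norm_sq_eq_trace_transpose_mul, ← trace_add, ← Matrix.add_mul, ← Matrix.mul_add,
      add_sub_cancel, Matrix.mul_one]
  exact pow_le_pow_iff_left₀ (norm_nonneg _) (norm_nonneg _) two_ne_zero |>.mp <| by
    linarith [sq_nonneg ‖(1 - Q) * A‖]

theorem trace_mul_transpose_mul_self_mul_transpose {k : Type*} [Fintype k] (B : Matrix m n ℝ)
    (Λ : Matrix k n ℝ) : (B * (Λᵀ * Λ) * Bᵀ).trace = ‖B * Λᵀ‖ ^ 2 := by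
  rw [frobenius_norm_sq_eq_trace_mul_transpose, transpose_mul, transpose_transpose,
    Matrix.mul_assoc, Matrix.mul_assoc, Matrix.mul_assoc]

end Frobenius

section Eigenvalues

open scoped MatrixOrder

variable {m n : Type*} [Fintype m] [Fintype n] [DecidableEq n]

theorem posSemidef_sub_smul_one_of_le_eigenvalues {S : Matrix n n ℝ} (hS : S.IsHermitian)
    {c : ℝ} (hc : ∀ i, c ≤ hS.eigenvalues i) : (S - c • 1).PosSemidef := by
  rw [← Matrix.le_iff, ← Algebra.algebraMap_eq_smul_one,
    algebraMap_le_iff_le_spectrum hS.isSelfAdjoint, hS.spectrum_real_eq_range_eigenvalues]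
  rintro _ ⟨i, rfl⟩
  exact hc i

theorem mul_frobenius_norm_sq_le_trace_of_le_eigenvalues {S : Matrix n n ℝ}
    (hS : S.IsHermitian) {c : ℝ} (hc : ∀ i, c ≤ hS.eigenvalues i) (B : Matrix m n ℝ) :
    c * ‖B‖ ^ 2 ≤ (B * S * Bᵀ).trace := by
  have hpsd := (posSemidef_sub_smul_one_of_le_eigenvalues hS hc).mul_mul_conjTranspose_same B
  rw [conjTranspose_eq_transpose_of_trivial, Matrix.mul_sub, Matrix.sub_mul, Matrix.mul_smul,
    Matrix.smul_mul, Matrix.mul_one] at hpsd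
  have := hpsd.trace_nonneg
  rwa [trace_sub, trace_smul, smul_eq_mul, sub_nonneg,
    ← frobenius_norm_sq_eq_trace_mul_transpose] at this

end Eigenvalues

section ColumnProjection

variable {m n : Type*} [Fintype n] {F : Matrix m n ℝ} {c : ℝ}

theorem transpose_one_sub_inv_smul_mul_transpose [DecidableEq m] :
    (1 - c⁻¹ • (F * Fᵀ))ᵀ = 1 - c⁻¹ • (F * Fᵀ) := by
  rw [transpose_sub, transpose_one, transpose_smul, transpose_mul, transpose_transpose]

variable [Fintype m] [DecidableEq n] (hc : c ≠ 0) (hF : Fᵀ * F = c • 1)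
include hc hF

theorem isIdempotentElem_inv_smul_mul_transpose : IsIdempotentElem (c⁻¹ • (F * Fᵀ)) := by
  rw [IsIdempotentElem, Matrix.smul_mul, Matrix.mul_smul, Matrix.mul_assoc,
    ← Matrix.mul_assoc Fᵀ, hF, Matrix.smul_mul, Matrix.one_mul, Matrix.mul_smul, smul_smul,
    smul_smul, mul_assoc, inv_mul_cancel₀ hc, mul_one]

theorem one_sub_inv_smul_mul_transpose_mul_self [DecidableEq m] :
    (1 - c⁻¹ • (F * Fᵀ)) * F = 0 := by
  rw [Matrix.sub_mul, Matrix.one_mul, Matrix.smul_mul, Matrix.mul_assoc, hF, Matrix.mul_smul,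
    Matrix.mul_one, smul_smul, inv_mul_cancel₀ hc, one_smul, sub_self]

end ColumnProjection

theorem factor_space_consistency_general {T N r : ℕ} (hT : 0 < T)
    (F Fhat : Matrix (Fin T) (Fin r) ℝ) (Λ Λhat : Matrix (Fin N) (Fin r) ℝ)
    (hFhat : Fhatᵀ * Fhat = (T : ℝ) • (1 : Matrix (Fin r) (Fin r) ℝ))
    (δ : ℝ)
    (hδ : (1 / ((N : ℝ) * T)) * ‖Λhat * Fhatᵀ - Λ * Fᵀ‖ ^ 2 ≤ δ ^ 2)
    (hH : (((N : ℝ)⁻¹) • (Λᵀ * Λ)).IsHermitian) :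
    (1 / (T : ℝ)) *
        ‖((1 : Matrix (Fin T) (Fin T) ℝ) - ((T : ℝ)⁻¹) • (Fhat * Fhatᵀ)) * F‖ ^ 2 *
        (⨅ i : Fin r, hH.eigenvalues i) ≤ δ ^ 2 := by
  have hT0 : (T : ℝ) ≠ 0 := Nat.cast_ne_zero.mpr hT.ne'
  set Q := (1 : Matrix (Fin T) (Fin T) ℝ) - ((T : ℝ)⁻¹) • (Fhat * Fhatᵀ)
  set M := Λhat * Fhatᵀ - Λ * Fᵀ
  set c := ⨅ i : Fin r, hH.eigenvalues i
  have hQt : Qᵀ = Q := transpose_one_sub_inv_smul_mul_transpose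
  have hQ : IsIdempotentElem Q := (isIdempotentElem_inv_smul_mul_transpose hT0 hFhat).one_sub
  have hQM : Q * Mᵀ = -(Q * F * Λᵀ) := by
    rw [transpose_sub, transpose_mul, transpose_mul, transpose_transpose, transpose_transpose,
      Matrix.mul_sub, ← Matrix.mul_assoc, one_sub_inv_smul_mul_transpose_mul_self hT0 hFhat,
      Matrix.zero_mul, zero_sub, Matrix.mul_assoc]
  have key : c * ‖Q * F‖ ^ 2 ≤ (N : ℝ)⁻¹ * ‖M‖ ^ 2 :=
    calc c * ‖Q * F‖ ^ 2
        ≤ (Q * F * ((N : ℝ)⁻¹ • (Λᵀ * Λ)) * (Q * F)ᵀ).trace :=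
          mul_frobenius_norm_sq_le_trace_of_le_eigenvalues hH
            (fun i => ciInf_le (Finite.bddBelow_range _) i) _
      _ = (N : ℝ)⁻¹ * ‖Q * Mᵀ‖ ^ 2 := by
          rw [Matrix.mul_smul, Matrix.smul_mul, trace_smul,
            trace_mul_transpose_mul_self_mul_transpose, hQM, norm_neg, smul_eq_mul]
      _ ≤ (N : ℝ)⁻¹ * ‖M‖ ^ 2 := by
          gcongr
          simpa only [frobenius_norm_transpose] using
            frobenius_norm_mul_le_of_isIdempotentElem hQt hQ Mᵀ
  calc 1 / (T : ℝ) * ‖Q * F‖ ^ 2 * c = (T : ℝ)⁻¹ * (c * ‖Q * F‖ ^ 2) := by ring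
    _ ≤ (T : ℝ)⁻¹ * ((N : ℝ)⁻¹ * ‖M‖ ^ 2) := by gcongr
    _ = 1 / ((N : ℝ) * T) * ‖M‖ ^ 2 := by ring
    _ ≤ δ ^ 2 := hδ

/-- If `FᵀF/T = F̂ᵀF̂/T = I_r` and `(1/(NT))‖Λ̂F̂ᵀ - ΛFᵀ‖² ≤ δ²` (Frobenius norm),
then `(1/T)‖(I - P_{F̂})F‖² λ_min(ΛᵀΛ/N) ≤ δ²`, where `P_{F̂} = F̂F̂ᵀ/T`. -/
theorem factor_space_consistency {T N r : ℕ} (hT : 0 < T) (hN : 0 < N) (hr : 0 < r)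
    (F Fhat : Matrix (Fin T) (Fin r) ℝ) (Λ Λhat : Matrix (Fin N) (Fin r) ℝ)
    (hF : Fᵀ * F = (T : ℝ) • (1 : Matrix (Fin r) (Fin r) ℝ))
    (hFhat : Fhatᵀ * Fhat = (T : ℝ) • (1 : Matrix (Fin r) (Fin r) ℝ))
    (δ : ℝ)
    (hδ : (1 / ((N : ℝ) * T)) * ‖Λhat * Fhatᵀ - Λ * Fᵀ‖ ^ 2 ≤ δ ^ 2)
    (hH : (((N : ℝ)⁻¹) • (Λᵀ * Λ)).IsHermitian) :
    (1 / (T : ℝ)) *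
        ‖((1 : Matrix (Fin T) (Fin T) ℝ) - ((T : ℝ)⁻¹) • (Fhat * Fhatᵀ)) * F‖ ^ 2 *
        (⨅ i : Fin r, hH.eigenvalues i) ≤ δ ^ 2 :=
  factor_space_consistency_general hT F Fhat Λ Λhat hFhat δ hδ hH
end
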